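/- Under the q-deformed beta-binomial swap kernel with μ = ν_{n+1}/ν_n, ν = ν_{n+1} (where 0 < ν_{n+1} < ν_n < 1), the following summation identity holds for all integers x_{n+1} < x_n and nonnegative integers a, b: ∑_{x'=x_{n+1}+1}^{x_n} φ_{q, ν_{n+1}/ν_n, ν_{n+1}}(x'−x_{n+1}−1 | x_n−x_{n+1}−1) · q^{a(x_{n+1}+n+1)+b(x'+n)} = ∑_{r=0}^{b} φ_{q, ν_{n+1}/ν_n, ν_{n+1}}(r | b) · q^{(a+b−r)(x_{n+1}+n+1)+r(x_n+n)}. -/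

import Mathlib

open Finset

/-- The q-Pochhammer symbol `(x;q)_k = ∏_{i=0}^{k-1} (1 - q^i x)`. -/
noncomputable def qPoch (q x : ℝ) (k : ℕ) : ℝ := ∏ i ∈ Finset.range k, (1 - q ^ i * x)

/-- The q-deformed beta-binomial weight `φ_{q,μ,ν}(j|m)`. -/
noncomputable def qHahnPhi (q μ ν : ℝ) (j m : ℕ) : ℝ :=
  μ ^ j * (qPoch q (ν / μ) j * qPoch q μ (m - j)) / qPoch q ν m *
    (qPoch q q m / (qPoch q q j * qPoch q q (m - j)))

/-!
Write `M(m,b) = (μx;q)_m ∑_j φ_{q,μ,μx}(j|m) q^{bj}` and `H(m,b) = M(m,b) / (μx;q)_m`. The two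
q-Pascal rules give `M(m,0) = (μx;q)_m` and
`M(m+1,b) = (1 - μx q^b) M(m,b+1) + μ (q^b - q^m) M(m,b)`, i.e.
`(1 - μx q^m) H(m+1,b) = (1 - μx q^b) H(m,b+1) + μ (q^b - q^m) H(m,b)`.
This recurrence is invariant under `H(m,b) ↦ H(b,m)`, and together with `H(m,0) = 1 = H(0,b)` it
determines `H` by induction on `b`; hence `H` is symmetric. The swap identity is this symmetry
after the shift `x' = x_{n+1} + 1 + j` and after pulling out the factor `q^{(a+b)(x_{n+1}+n+1)}`.
-/

@[simp] lemma qPoch_zero (q x : ℝ) : qPoch q x 0 = 1 := prod_range_zero _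

lemma qPoch_succ (q x : ℝ) (k : ℕ) : qPoch q x (k + 1) = qPoch q x k * (1 - q ^ k * x) :=
  prod_range_succ _ _

lemma qPoch_pos {q x : ℝ} (hq0 : 0 ≤ q) (hq1 : q ≤ 1) (hx : x < 1) (k : ℕ) :
    0 < qPoch q x k := by
  refine prod_pos fun i _ => ?_
  have : q ^ i ≤ 1 := pow_le_one₀ hq0 hq1
  rcases le_or_gt 0 x with h | h <;> nlinarith [pow_nonneg hq0 i]

noncomputable def qBinom (q : ℝ) (m j : ℕ) : ℝ :=
  if j ≤ m then qPoch q q m / (qPoch q q j * qPoch q q (m - j)) else 0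

section qBinom

variable {q : ℝ}

lemma qBinom_of_lt {m j : ℕ} (h : m < j) : qBinom q m j = 0 := if_neg (by omega)

lemma qBinom_sub {m j : ℕ} (h : j ≤ m) : qBinom q m (m - j) = qBinom q m j := by
  simp [qBinom, h, Nat.sub_sub_self h, mul_comm]

variable (hq : ∀ k, qPoch q q k ≠ 0)
include hq

@[simp] lemma qBinom_zero_right (m : ℕ) : qBinom q m 0 = 1 := by
  simp [qBinom, hq]

lemma qBinom_self (m : ℕ) : qBinom q m m = 1 := by
  simp [qBinom, hq]

lemma qBinom_succ_succ (m j : ℕ) :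
    qBinom q (m + 1) (j + 1) = q ^ (j + 1) * qBinom q m (j + 1) + qBinom q m j := by
  rcases lt_trichotomy j m with h | rfl | h
  · obtain ⟨e, rfl⟩ := Nat.exists_eq_add_of_lt h
    have hj1 := hq (j + 1)
    have he1 := hq (e + 1)
    rw [qPoch_succ, mul_ne_zero_iff] at hj1 he1
    rw [qBinom, qBinom, qBinom, if_pos (by omega), if_pos (by omega), if_pos (by omega),
      show j + e + 1 + 1 - (j + 1) = e + 1 by omega, show j + e + 1 - (j + 1) = e by omega,
      show j + e + 1 - j = e + 1 by omega, qPoch_succ q q (j + e + 1), qPoch_succ q q j,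
      qPoch_succ q q e, pow_succ, pow_succ, pow_add]
    generalize q ^ j = A, q ^ e = B at *
    field_simp [hj1.1, hj1.2, he1.1, he1.2]
    ring
  · rw [qBinom_self hq, qBinom_self hq, qBinom_of_lt (by omega)]
    ring
  · rw [qBinom_of_lt (by omega), qBinom_of_lt (by omega), qBinom_of_lt h]
    ring

/-- The second q-Pascal rule is the first one applied to the reflected indices `m - j`. -/
lemma qBinom_succ_succ' (m j : ℕ) :
    qBinom q (m + 1) (j + 1) = qBinom q m (j + 1) + q ^ (m - j) * qBinom q m j := by
  rcases lt_or_ge j m with h | h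
  · obtain ⟨k, hk⟩ : ∃ k, m - j = k + 1 := ⟨m - j - 1, by omega⟩
    rw [← qBinom_sub (by omega : j + 1 ≤ m + 1), show m + 1 - (j + 1) = k + 1 by omega,
      qBinom_succ_succ hq, hk, ← qBinom_sub (by omega : j ≤ m),
      ← qBinom_sub (by omega : j + 1 ≤ m), hk, show m - (j + 1) = k by omega]
    ring
  · rcases h.eq_or_lt with rfl | h
    · rw [qBinom_self hq, qBinom_self hq, qBinom_of_lt (by omega)]
      simp
    · rw [qBinom_of_lt (by omega), qBinom_of_lt (by omega), qBinom_of_lt h]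
      ring

end qBinom

lemma sum_range_succ_of_succ_eq_add {M : Type*} [AddCommMonoid M] {f g h : ℕ → M}
    (h0 : f 0 = g 0) (hsucc : ∀ j, f (j + 1) = g (j + 1) + h j) (n : ℕ) :
    ∑ j ∈ range (n + 1), f j = ∑ j ∈ range (n + 1), g j + ∑ j ∈ range n, h j := by
  simp only [sum_range_succ', hsucc, sum_add_distrib, h0]
  abel

noncomputable def qHahnTerm (q μ x : ℝ) (m b j : ℕ) : ℝ :=
  qBinom q m j * (μ * q ^ b) ^ j * qPoch q x j * qPoch q μ (m - j)

/-- `(μx;q)_m` times the moment `∑_j φ_{q,μ,μx}(j|m) q^{bj}`. -/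
noncomputable def qHahnMoment (q μ x : ℝ) (m b : ℕ) : ℝ :=
  ∑ j ∈ range (m + 1), qHahnTerm q μ x m b j

section qHahnMoment

variable {q μ x : ℝ} (hq : ∀ k, qPoch q q k ≠ 0)
include hq

@[simp] lemma qHahnMoment_zero_left (b : ℕ) : qHahnMoment q μ x 0 b = 1 := by
  simp [qHahnMoment, qHahnTerm, hq]

lemma qHahnMoment_zero_right (m : ℕ) : qHahnMoment q μ x m 0 = qPoch q (μ * x) m := by
  induction m with
  | zero => simp [hq]
  | succ m ih =>
    have hsplit := sum_range_succ_of_succ_eq_add (f := qHahnTerm q μ x (m + 1) 0)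
      (g := fun j => qBinom q m j * μ ^ j * qPoch q x j * qPoch q μ (m + 1 - j))
      (h := fun j =>
        q ^ (m - j) * qBinom q m j * μ ^ (j + 1) * qPoch q x (j + 1) * qPoch q μ (m - j))
      (by simp [qHahnTerm, hq])
      (fun j => by simp only [qHahnTerm, qBinom_succ_succ' hq]; simp; ring) (m + 1)
    have hterm : ∀ j ∈ range (m + 1),
        qBinom q m j * μ ^ j * qPoch q x j * qPoch q μ (m + 1 - j) +
          q ^ (m - j) * qBinom q m j * μ ^ (j + 1) * qPoch q x (j + 1) * qPoch q μ (m - j) =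
        (1 - q ^ m * (μ * x)) * qHahnTerm q μ x m 0 j := by
      intro j hj
      rw [mem_range_succ_iff] at hj
      have hqm : q ^ (m - j) * q ^ j = q ^ m := by rw [← pow_add, Nat.sub_add_cancel hj]
      rw [show m + 1 - j = m - j + 1 by omega, qPoch_succ, qPoch_succ, qHahnTerm]
      linear_combination
        (-(qBinom q m j * μ ^ j * qPoch q x j * qPoch q μ (m - j) * μ * x)) * hqm
    rw [qHahnMoment, hsplit, sum_range_succ _ (m + 1), qBinom_of_lt (by omega), zero_mul,
      zero_mul, zero_mul, add_zero, ← sum_add_distrib, sum_congr rfl hterm, ← mul_sum,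
      qPoch_succ, ← ih]
    simp [qHahnMoment, mul_comm]

lemma qHahnMoment_succ (m b : ℕ) :
    qHahnMoment q μ x (m + 1) b =
      (1 - μ * x * q ^ b) * qHahnMoment q μ x m (b + 1) +
        μ * (q ^ b - q ^ m) * qHahnMoment q μ x m b := by
  have hsplit := sum_range_succ_of_succ_eq_add (f := qHahnTerm q μ x (m + 1) b)
    (g := fun j => q ^ j * qBinom q m j * (μ * q ^ b) ^ j * qPoch q x j * qPoch q μ (m + 1 - j))
    (h := fun j => qBinom q m j * (μ * q ^ b) ^ (j + 1) * qPoch q x (j + 1) * qPoch q μ (m - j))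
    (by simp [qHahnTerm, hq])
    (fun j => by simp only [qHahnTerm, qBinom_succ_succ hq]; simp; ring) (m + 1)
  have hterm : ∀ j ∈ range (m + 1),
      q ^ j * qBinom q m j * (μ * q ^ b) ^ j * qPoch q x j * qPoch q μ (m + 1 - j) +
        qBinom q m j * (μ * q ^ b) ^ (j + 1) * qPoch q x (j + 1) * qPoch q μ (m - j) =
      (1 - μ * x * q ^ b) * qHahnTerm q μ x m (b + 1) j +
        μ * (q ^ b - q ^ m) * qHahnTerm q μ x m b j := by
    intro j hj
    rw [mem_range_succ_iff] at hj
    have hqm : q ^ (m - j) * q ^ j = q ^ m := by rw [← pow_add, Nat.sub_add_cancel hj]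
    rw [show m + 1 - j = m - j + 1 by omega, qPoch_succ, qPoch_succ, qHahnTerm, qHahnTerm,
      pow_succ q b, mul_pow, mul_pow, mul_pow]
    linear_combination
      (-(qBinom q m j * μ ^ j * (q ^ b) ^ j * qPoch q x j * qPoch q μ (m - j) * μ)) * hqm
  rw [qHahnMoment, hsplit, sum_range_succ _ (m + 1), qBinom_of_lt (by omega), mul_zero, zero_mul,
    zero_mul, zero_mul, add_zero, ← sum_add_distrib, sum_congr rfl hterm, sum_add_distrib,
    ← mul_sum, ← mul_sum]
  rfl

theorem qHahnMoment_mul_qPoch_comm (b m : ℕ) :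
    qHahnMoment q μ x m b * qPoch q (μ * x) b = qHahnMoment q μ x b m * qPoch q (μ * x) m := by
  induction b generalizing m with
  | zero => simp [qHahnMoment_zero_right hq, hq]
  | succ b ih =>
    rcases m with _ | k
    · simp [qHahnMoment_zero_right hq, hq]
    · calc qHahnMoment q μ x (k + 1) (b + 1) * qPoch q (μ * x) (b + 1)
          = (qHahnMoment q μ x (k + 2) b -
              μ * (q ^ b - q ^ (k + 1)) * qHahnMoment q μ x (k + 1) b) * qPoch q (μ * x) b := by
            rw [qHahnMoment_succ hq (k + 1) b, qPoch_succ]; ring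
        _ = qHahnMoment q μ x b (k + 2) * qPoch q (μ * x) (k + 2) -
              μ * (q ^ b - q ^ (k + 1)) *
                (qHahnMoment q μ x b (k + 1) * qPoch q (μ * x) (k + 1)) := by
            rw [sub_mul, ih, mul_assoc, ih]
        _ = qHahnMoment q μ x (b + 1) (k + 1) * qPoch q (μ * x) (k + 1) := by
            rw [qHahnMoment_succ hq b (k + 1), qPoch_succ q _ (k + 1)]; ring

end qHahnMoment

lemma sum_qHahnPhi_mul_pow (q μ ν : ℝ) (m b : ℕ) :
    ∑ j ∈ range (m + 1), qHahnPhi q μ ν j m * q ^ (b * j) =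
      qHahnMoment q μ (ν / μ) m b / qPoch q ν m := by
  rw [qHahnMoment, sum_div]
  refine sum_congr rfl fun j hj => ?_
  rw [qHahnPhi, qHahnTerm, qBinom, if_pos (mem_range_succ_iff.mp hj), mul_pow, ← pow_mul]
  ring

theorem sum_qHahnPhi_mul_pow_comm {q μ ν : ℝ} (hq : ∀ k, qPoch q q k ≠ 0) (hμ : μ ≠ 0)
    (hν : ∀ k, qPoch q ν k ≠ 0) (m b : ℕ) :
    ∑ j ∈ range (m + 1), qHahnPhi q μ ν j m * q ^ (b * j) =
      ∑ r ∈ range (b + 1), qHahnPhi q μ ν r b * q ^ (m * r) := by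
  rw [sum_qHahnPhi_mul_pow, sum_qHahnPhi_mul_pow, div_eq_div_iff (hν m) (hν b)]
  have := qHahnMoment_mul_qPoch_comm (μ := μ) (x := ν / μ) hq b m
  rwa [mul_div_cancel₀ ν hμ] at this

/-- The swap-kernel summation identity from the proof of Theorem 3.7:
`∑_{x'=x_{n+1}+1}^{x_n} φ_{q,ν_{n+1}/ν_n,ν_{n+1}}(x'-x_{n+1}-1 | x_n-x_{n+1}-1)
   q^{a(x_{n+1}+n+1)+b(x'+n)}
 = ∑_{r=0}^{b} φ_{q,ν_{n+1}/ν_n,ν_{n+1}}(r|b) q^{(a+b-r)(x_{n+1}+n+1)+r(x_n+n)}`. -/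
theorem qHahn_swap_duality_sum (q νn νn1 : ℝ) (hq0 : 0 < q) (hq1 : q < 1)
    (hν0 : 0 < νn1) (hord : νn1 < νn) (hν1 : νn < 1)
    (n : ℕ) (a b : ℕ) (xn xn1 : ℤ) (hx : xn1 < xn) :
    ∑ x' ∈ Finset.Icc (xn1 + 1) xn,
        qHahnPhi q (νn1 / νn) νn1 (x' - xn1 - 1).toNat (xn - xn1 - 1).toNat *
          q ^ ((a : ℤ) * (xn1 + (n : ℤ) + 1) + (b : ℤ) * (x' + (n : ℤ))) =
      ∑ r ∈ Finset.range (b + 1),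
        qHahnPhi q (νn1 / νn) νn1 r b *
          q ^ (((a : ℤ) + (b : ℤ) - (r : ℤ)) * (xn1 + (n : ℤ) + 1) +
            (r : ℤ) * (xn + (n : ℤ))) := by
  obtain ⟨m, rfl⟩ : ∃ m : ℕ, xn = xn1 + 1 + m := ⟨(xn - xn1 - 1).toNat, by omega⟩
  have hq : ∀ k, qPoch q q k ≠ 0 := fun k => (qPoch_pos hq0.le hq1.le hq1 k).ne'
  have hν : ∀ k, qPoch q νn1 k ≠ 0 := fun k => (qPoch_pos hq0.le hq1.le (hord.trans hν1) k).ne'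
  have hμ : νn1 / νn ≠ 0 := (div_pos hν0 (hν0.trans hord)).ne'
  set C := q ^ (((a : ℤ) + b) * (xn1 + n + 1))
  have hpow (k : ℕ) : q ^ (((a : ℤ) + b) * (xn1 + n + 1) + (k : ℤ)) = C * q ^ k := by
    rw [zpow_add₀ hq0.ne', zpow_natCast]
  rw [Int.Icc_eq_finset_map, sum_map, show (xn1 + 1 + m + 1 - (xn1 + 1)).toNat = m + 1 by omega]
  calc
    _ = ∑ j ∈ range (m + 1), C * (qHahnPhi q (νn1 / νn) νn1 j m * q ^ (b * j)) := by
      refine sum_congr rfl fun j _ => ?_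
      simp only [Function.Embedding.trans_apply, Nat.castEmbedding_apply, addLeftEmbedding_apply]
      rw [show (xn1 + 1 + j - xn1 - 1).toNat = j by omega,
        show (xn1 + 1 + m - xn1 - 1).toNat = m by omega,
        show (a : ℤ) * (xn1 + n + 1) + b * (xn1 + 1 + j + n) =
          ((a : ℤ) + b) * (xn1 + n + 1) + (b * j : ℕ) by push_cast; ring, hpow]
      ring
    _ = ∑ r ∈ range (b + 1), C * (qHahnPhi q (νn1 / νn) νn1 r b * q ^ (m * r)) := by
      rw [← mul_sum, ← mul_sum, sum_qHahnPhi_mul_pow_comm hq hμ hν]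
    _ = _ := by
      refine sum_congr rfl fun r _ => ?_
      rw [show ((a : ℤ) + b - r) * (xn1 + n + 1) + r * (xn1 + 1 + m + n) =
          ((a : ℤ) + b) * (xn1 + n + 1) + (m * r : ℕ) by push_cast; ring, hpow]
      ring
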